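/- Let TA be a timed automaton. Then the reachable subsystems of TS(TA) and TS(PUR(TA)) are isomorphic: there is a bijection g from the reachable states of TS(TA) onto the reachable states of TS(PUR(TA)) such that g maps the initial states of TS(TA) exactly onto the initial states of TS(PUR(TA)), and for all reachable states q, q' and every label α ∈ Σ ∪ ℝ≥0, q →α q' in TS(TA) if and only if g(q) →α g(q') in TS(PUR(TA)). -/

import Mathlib

/-!
Framework for timed automata.  Clock valuations assign non-negative reals to
clocks.  Guards and location invariants are represented semantically, as
predicates on clock valuations.
-/

/-- Clock valuations: each clock gets a non-negative real. -/
abbrev Val (C : Type) := C → NNReal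

/-- The valuation `ν₀` assigning `0` to every clock. -/
def zeroVal {C : Type} : Val C := fun _ => 0

open Classical in
/-- `ν[λ := 0]`: reset the clocks in `lam` to zero. -/
noncomputable def resetVal {C : Type} (ν : Val C) (lam : Set C) : Val C :=
  fun x => if x ∈ lam then 0 else ν x

/-- `ν + δ`: advance every clock by `δ`. -/
def shift {C : Type} (ν : Val C) (δ : NNReal) : Val C := fun x => ν x + δ

/-- A timed automaton `TA = (L, L₀, L_u, Σ, CX, I, E)` with location type `L`,
action alphabet `A` and clock type `C`:  a set of initial locations (nonempty),
a set of urgent locations, an invariant map, and a set of edges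
`(l, a, φ, λ, l')` consisting of source, action, guard, reset set and target. -/
structure TA (L A C : Type) where
  init : Set L
  init_nonempty : init.Nonempty
  urgent : Set L
  inv : L → Val C → Prop
  edges : Set (L × A × (Val C → Prop) × Set C × L)

/-- States of the associated transition systems: location/valuation pairs. -/
abbrev State (L C : Type) := L × Val C

/-- Initial states: initial locations paired with the zero valuation. -/
def TA.initStates {L A C : Type} (T : TA L A C) : Set (State L C) :=
  {p | p.1 ∈ T.init ∧ p.2 = zeroVal}

/-- Baseline semantics `TS(TA)`.  Labels are `Sum.inl a` for actions `a ∈ Σ`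
and `Sum.inr δ` for delays `δ ∈ ℝ≥0`.  Action transitions require the target
invariant to hold; delay transitions require the source location not to be
urgent and the invariant to hold throughout the delay. -/
def TS {L A C : Type} (T : TA L A C) :
    State L C → (A ⊕ NNReal) → State L C → Prop := fun p α q =>
  match α with
  | Sum.inl a => ∃ φ lam, (p.1, a, φ, lam, q.1) ∈ T.edges ∧ φ p.2 ∧
      q.2 = resetVal p.2 lam ∧ T.inv q.1 q.2
  | Sum.inr δ => p.1 ∉ T.urgent ∧ q.1 = p.1 ∧ q.2 = shift p.2 δ ∧
      ∀ k ≤ δ, T.inv p.1 (shift p.2 k)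

/-- Unsatisfied-invariants semantics `TS'(TA)`: like `TS(TA)` except action
transitions do not require the target invariant to hold. -/
def TS' {L A C : Type} (T : TA L A C) :
    State L C → (A ⊕ NNReal) → State L C → Prop := fun p α q =>
  match α with
  | Sum.inl a => ∃ φ lam, (p.1, a, φ, lam, q.1) ∈ T.edges ∧ φ p.2 ∧
      q.2 = resetVal p.2 lam
  | Sum.inr δ => p.1 ∉ T.urgent ∧ q.1 = p.1 ∧ q.2 = shift p.2 δ ∧
      ∀ k ≤ δ, T.inv p.1 (shift p.2 k)

/-- Reachable states: smallest set containing the initial states and closed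
under the transition relation. -/
inductive Reachable {S Λ : Type} (init : Set S) (tr : S → Λ → S → Prop) : S → Prop
  | base {s : S} : s ∈ init → Reachable init tr s
  | step {s : S} {α : Λ} {s' : S} :
      Reachable init tr s → tr s α s' → Reachable init tr s'

/-- The construction `PUR(TA)`.  Locations are `L ⊕ L`: `Sum.inl l` is the
original location `l`, and `Sum.inr l` for `l ∈ L_B = {l ∈ L₀ | ν₀ ⊭ I(l)}`
plays the role of the fresh urgent copy `l_u ∈ F_u`.  Initial locations are
`(L₀ - L_B) ∪ F_u`, urgent locations are `L_u ∪ F_u`, the invariant of each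
fresh copy is `true`, and the edges are the original ones together with copies
`(l_u, a, φ, λ, l'')` of each edge `(l, a, φ, λ, l'')` with `l ∈ L_B`. -/
noncomputable def PUR {L A C : Type} (T : TA L A C) : TA (L ⊕ L) A C where
  init := Sum.inl '' {l | l ∈ T.init ∧ T.inv l zeroVal} ∪
          Sum.inr '' {l | l ∈ T.init ∧ ¬ T.inv l zeroVal}
  init_nonempty := by
    obtain ⟨l, hl⟩ := T.init_nonempty
    by_cases h : T.inv l zeroVal
    · exact ⟨Sum.inl l, Set.mem_union_left _ (Set.mem_image_of_mem _ ⟨hl, h⟩)⟩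
    · exact ⟨Sum.inr l, Set.mem_union_right _ (Set.mem_image_of_mem _ ⟨hl, h⟩)⟩
  urgent := Sum.inl '' T.urgent ∪ Sum.inr '' {l | l ∈ T.init ∧ ¬ T.inv l zeroVal}
  inv := fun l' ν =>
    match l' with
    | Sum.inl l => T.inv l ν
    | Sum.inr _ => True
  edges := { e | ∃ l a φ lam l', (l, a, φ, lam, l') ∈ T.edges ∧
      (e = (Sum.inl l, a, φ, lam, Sum.inl l') ∨
       (l ∈ T.init ∧ ¬ T.inv l zeroVal ∧ e = (Sum.inr l, a, φ, lam, Sum.inl l'))) }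

/-!
A state `(l, ν₀)` with `l ∈ L_B` violates its invariant, so it has no delay successors and,
since every transition of `TS(TA)` ends in a state satisfying its invariant, it is reachable
only as an initial state. Its action successors are exactly those of `(l_u, ν₀)` in
`PUR(TA)`, whose outgoing edges are copies of those of `l`. Hence sending `(l, ν₀)` to
`(l_u, ν₀)` for `l ∈ L_B` and fixing every other state is an isomorphism of the reachable
subsystems.
-/

theorem Reachable.image_eq {S S' Λ : Type} {init : Set S} {init' : Set S'}
    {tr : S → Λ → S → Prop} {tr' : S' → Λ → S' → Prop} (g : S → S')
    (hinit : g '' init = init') (htr : ∀ p q α, tr p α q ↔ tr' (g p) α (g q))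
    (hsucc : ∀ p α m, tr' (g p) α m → m ∈ Set.range g) :
    g '' {p | Reachable init tr p} = {m | Reachable init' tr' m} := by
  ext m
  constructor
  · rintro ⟨p, hp, rfl⟩
    induction hp with
    | base h => exact .base (hinit ▸ Set.mem_image_of_mem g h)
    | step _ ht ih => exact Reachable.step ih ((htr _ _ _).mp ht)
  · intro hm
    induction hm with
    | base h => exact Set.image_mono (fun _ => .base) (hinit ▸ h)
    | step _ ht ih =>
      obtain ⟨p, hp, rfl⟩ := ih
      obtain ⟨q, rfl⟩ := hsucc p _ _ ht
      exact ⟨q, Reachable.step hp ((htr _ _ _).mpr ht), rfl⟩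

theorem shift_zero {C : Type} (ν : Val C) : shift ν 0 = ν :=
  funext fun _ => add_zero _

theorem TS.inv_target {L A C : Type} {T : TA L A C} {p q : State L C} {α : A ⊕ NNReal}
    (h : TS T p α q) : T.inv q.1 q.2 := by
  cases α with
  | inl a =>
    obtain ⟨_, _, -, -, -, hinv⟩ := h
    exact hinv
  | inr δ =>
    obtain ⟨-, hq1, hq2, hdelay⟩ := h
    exact hq1 ▸ hq2 ▸ hdelay δ le_rfl

def forgetCopy {L C : Type} (m : State (L ⊕ L) C) : State L C := (m.1.elim id id, m.2)

section PUR

variable {L A C : Type} (T : TA L A C)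

theorem inl_mem_PUR_urgent_iff {l : L} : Sum.inl l ∈ (PUR T).urgent ↔ l ∈ T.urgent := by
  simp [PUR]

open Classical in
noncomputable def purMap (p : State L C) : State (L ⊕ L) C :=
  if p.1 ∈ T.init ∧ ¬ T.inv p.1 zeroVal ∧ p.2 = zeroVal
  then (Sum.inr p.1, p.2) else (Sum.inl p.1, p.2)

theorem leftInverse_forgetCopy_purMap : Function.LeftInverse forgetCopy (purMap T) := by
  intro p
  unfold purMap
  split_ifs <;> rfl

theorem purMap_injective : Function.Injective (purMap T) :=
  (leftInverse_forgetCopy_purMap T).injective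

theorem purMap_snd (p : State L C) : (purMap T p).2 = p.2 := by
  unfold purMap
  split_ifs <;> rfl

theorem purMap_of_inv {p : State L C} (h : T.inv p.1 p.2) :
    purMap T p = (Sum.inl p.1, p.2) :=
  if_neg fun ⟨_, hinv, hzero⟩ => hinv (hzero ▸ h)

theorem purMap_fst_mem_PUR_edges_iff {p : State L C} {a : A} {φ : Val C → Prop}
    {lam : Set C} {m : L ⊕ L} :
    ((purMap T p).1, a, φ, lam, m) ∈ (PUR T).edges ↔
      ∃ l', (p.1, a, φ, lam, l') ∈ T.edges ∧ m = Sum.inl l' := by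
  unfold purMap
  split_ifs with h
  · simp [PUR, h.1, h.2.1]
  · simp [PUR]

theorem TS_PUR_purMap_iff {p : State L C} {α : A ⊕ NNReal} {m : State (L ⊕ L) C} :
    TS (PUR T) (purMap T p) α m ↔ ∃ q, TS T p α q ∧ m = (Sum.inl q.1, q.2) := by
  cases α with
  | inl a =>
    simp only [TS, purMap_fst_mem_PUR_edges_iff, purMap_snd]
    constructor
    · rintro ⟨φ, lam, ⟨l', he, hm⟩, hg, hr, hi⟩
      obtain ⟨m1, m2⟩ := m
      subst hm
      exact ⟨(l', m2), ⟨φ, lam, he, hg, hr, hi⟩, rfl⟩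
    · rintro ⟨q, ⟨φ, lam, he, hg, hr, hi⟩, rfl⟩
      exact ⟨φ, lam, ⟨q.1, he, rfl⟩, hg, hr, hi⟩
  | inr δ =>
    unfold purMap
    split_ifs with hb
    · obtain ⟨hinit, hinv, hzero⟩ := hb
      refine iff_of_false (fun h => h.1 (Or.inr ⟨p.1, ⟨hinit, hinv⟩, rfl⟩)) ?_
      rintro ⟨q, ⟨-, -, -, hdelay⟩, -⟩
      exact hinv (by simpa [shift_zero, hzero] using hdelay 0 zero_le)
    · simp only [TS, inl_mem_PUR_urgent_iff]
      constructor
      · rintro ⟨hu, hm1, hm2, hdelay⟩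
        exact ⟨(p.1, shift p.2 δ), ⟨hu, rfl, rfl, hdelay⟩, Prod.ext hm1 hm2⟩
      · rintro ⟨q, ⟨hu, hq1, hq2, hdelay⟩, rfl⟩
        exact ⟨hu, congrArg _ hq1, hq2, hdelay⟩

theorem TS_iff_TS_PUR_purMap (p q : State L C) (α : A ⊕ NNReal) :
    TS T p α q ↔ TS (PUR T) (purMap T p) α (purMap T q) := by
  rw [TS_PUR_purMap_iff]
  constructor
  · intro h
    exact ⟨q, h, purMap_of_inv T h.inv_target⟩
  · rintro ⟨q', h, hq⟩
    rwa [← leftInverse_forgetCopy_purMap T q, hq]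

theorem image_purMap_initStates : purMap T '' T.initStates = (PUR T).initStates := by
  ext m
  constructor
  · rintro ⟨⟨l, _⟩, ⟨hl, rfl⟩, rfl⟩
    by_cases hi : T.inv l zeroVal
    · rw [purMap_of_inv T hi]
      exact ⟨Or.inl ⟨l, ⟨hl, hi⟩, rfl⟩, rfl⟩
    · rw [purMap, if_pos ⟨hl, hi, rfl⟩]
      exact ⟨Or.inr ⟨l, ⟨hl, hi⟩, rfl⟩, rfl⟩
  · rintro ⟨⟨l, ⟨hl, hi⟩, hm⟩ | ⟨l, ⟨hl, hi⟩, hm⟩, hzero⟩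
    · refine ⟨(l, zeroVal), ⟨hl, rfl⟩, ?_⟩
      rw [purMap_of_inv T hi]
      exact Prod.ext hm hzero.symm
    · refine ⟨(l, zeroVal), ⟨hl, rfl⟩, ?_⟩
      rw [purMap, if_pos ⟨hl, hi, rfl⟩]
      exact Prod.ext hm hzero.symm

end PUR

theorem statement_11_general {L A C : Type}
    (T : TA L A C) :
    ∃ g : State L C → State (L ⊕ L) C,
      Set.InjOn g {p | Reachable T.initStates (TS T) p} ∧
      g '' {p | Reachable T.initStates (TS T) p} =
        {q | Reachable (PUR T).initStates (TS (PUR T)) q} ∧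
      g '' T.initStates = (PUR T).initStates ∧
      (∀ p q, Reachable T.initStates (TS T) p → Reachable T.initStates (TS T) q →
        ∀ α : A ⊕ NNReal, TS T p α q ↔ TS (PUR T) (g p) α (g q)) := by
  have hsucc : ∀ p α m, TS (PUR T) (purMap T p) α m → m ∈ Set.range (purMap T) := by
    intro p α m h
    obtain ⟨q, hq, rfl⟩ := (TS_PUR_purMap_iff T).mp h
    exact ⟨q, purMap_of_inv T hq.inv_target⟩
  exact ⟨purMap T, (purMap_injective T).injOn,
    Reachable.image_eq _ (image_purMap_initStates T) (TS_iff_TS_PUR_purMap T) hsucc,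
    image_purMap_initStates T, fun p q _ _ => TS_iff_TS_PUR_purMap T p q⟩

/-- the reachable subsystems of `TS(TA)` and `TS(PUR(TA))` are
isomorphic: there is a bijection `g` from the reachable states of `TS(TA)`
onto the reachable states of `TS(PUR(TA))` mapping initial states exactly onto
initial states and such that for all reachable `q, q'` and labels `α`,
`q →α q'` in `TS(TA)` iff `g q →α g q'` in `TS(PUR(TA))`. -/
theorem statement_11 {L A C : Type} [Fintype L] [Fintype A] [Fintype C] [Nonempty C]
    (T : TA L A C) :
    ∃ g : State L C → State (L ⊕ L) C,
      Set.InjOn g {p | Reachable T.initStates (TS T) p} ∧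
      g '' {p | Reachable T.initStates (TS T) p} =
        {q | Reachable (PUR T).initStates (TS (PUR T)) q} ∧
      g '' T.initStates = (PUR T).initStates ∧
      (∀ p q, Reachable T.initStates (TS T) p → Reachable T.initStates (TS T) q →
        ∀ α : A ⊕ NNReal, TS T p α q ↔ TS (PUR T) (g p) α (g q)) :=
  statement_11_general T
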